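/- Let A be a K-tuple of polytopes. A subtuple AJ (J ⊆ K) is called essential if dim(AI) > dim(AJ) for every proper subset I ⊊ J, and dim(AJ) = min_{I⊆K} dim(AI). Then there exists a unique maximal J ⊆ K such that AJ is essential, and this J coincides with the unique minimal subset I₀ with dim(AI₀) = min dim A. -/

import Mathlib

/-!
The vector span of a Minkowski sum of nonempty sets is the join of the vector spans of the
summands, so Grassmann's formula `dim (U + W) + dim (U ∩ W) = dim U + dim W`, together with
`|I ∪ J| + |I ∩ J| = |I| + |J|`, makes `J ↦ dim AJ` submodular. The minimizers of a submodular
function are closed under intersection, so there is a least minimizer `I₀`, and a subtuple is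
essential exactly when it is `I₀`.
-/

open Pointwise MeasureTheory Metric

noncomputable section

/-- Ambient Euclidean space `ℝⁿ`. -/
abbrev V (n : ℕ) : Type := EuclideanSpace ℝ (Fin n)

/-- Dimension of (the affine span of) a subset of `ℝⁿ`. -/
def affDim {n : ℕ} (s : Set (V n)) : ℕ := Module.finrank ℝ (vectorSpan ℝ s)

/-- A (compact convex) polytope: the convex hull of a nonempty finite set. -/
def IsPolytope {n : ℕ} (P : Set (V n)) : Prop :=
  ∃ F : Finset (V n), F.Nonempty ∧ P = convexHull ℝ (F : Set (V n))

/-- `dim AJ = dim (∑_{j ∈ J} A j) − |J|` for a tuple of polytopes; the empty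
Minkowski sum is `{0}` (the `0` of the pointwise monoid on sets). -/
def tdim {n : ℕ} {K : Type} [Fintype K] (A : K → Set (V n)) (J : Finset K) : ℤ :=
  (affDim (∑ j ∈ J, A j) : ℤ) - J.card


/-- A subtuple `AJ` is essential if `dim AJ` is the minimum of `dim` over all
subtuples, and every proper subtuple has strictly bigger `dim`. -/
def Essential {n : ℕ} {K : Type} [Fintype K] (A : K → Set (V n)) (J : Finset K) : Prop :=
  IsLeast (Set.range (tdim A)) (tdim A J) ∧ ∀ I : Finset K, I ⊂ J → tdim A J < tdim A I

section VectorSpan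

variable {k E : Type*} [Ring k] [AddCommGroup E] [Module k E]

theorem vectorSpan_add {s t : Set E} (hs : s.Nonempty) (ht : t.Nonempty) :
    vectorSpan k (s + t) = vectorSpan k s ⊔ vectorSpan k t := by
  apply le_antisymm
  · rw [vectorSpan_def, Submodule.span_le]
    rintro _ ⟨_, ⟨a, ha, b, hb, rfl⟩, _, ⟨a', ha', b', hb', rfl⟩, rfl⟩
    simp only [SetLike.mem_coe, vsub_eq_sub, add_sub_add_comm]
    exact Submodule.add_mem_sup (vsub_mem_vectorSpan k ha ha') (vsub_mem_vectorSpan k hb hb')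
  · obtain ⟨a, ha⟩ := hs
    obtain ⟨b, hb⟩ := ht
    refine sup_le ?_ ?_
    · rw [← vectorSpan_vadd k s b, add_comm]
      exact vectorSpan_mono k (Set.vadd_set_subset_add hb)
    · rw [← vectorSpan_vadd k t a]
      exact vectorSpan_mono k (Set.vadd_set_subset_add ha)

theorem vectorSpan_finset_sum {ι : Type*} {A : ι → Set E} (hA : ∀ i, (A i).Nonempty)
    (J : Finset ι) : vectorSpan k (∑ j ∈ J, A j) = J.sup fun j => vectorSpan k (A j) := by
  classical
  induction J using Finset.induction with
  | empty => simp [← Set.singleton_zero]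
  | insert i J hi ih =>
    have hne : (∑ j ∈ J, A j).Nonempty :=
      ⟨_, Set.finsetSum_mem_finsetSum J A _ fun j _ => (hA j).some_mem⟩
    rw [Finset.sum_insert hi, vectorSpan_add (hA i) hne, Finset.sup_insert, ih]

end VectorSpan

theorem Set.Finite.exists_isLeast_of_infClosed {α : Type*} [SemilatticeInf α] {S : Set α}
    (hfin : S.Finite) (hne : S.Nonempty) (hS : InfClosed S) : ∃ a, IsLeast S a :=
  ⟨hfin.toFinset.inf' (by simpa) id, hS.finsetInf'_mem _ (by simp),
    fun _ hb => Finset.inf'_le id (hfin.mem_toFinset.2 hb)⟩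

theorem infClosed_minimizers_of_submodular {K : Type*} [DecidableEq K] {f : Finset K → ℤ}
    {m : ℤ} (hf : ∀ I J, f (I ∪ J) + f (I ∩ J) ≤ f I + f J) (hm : IsLeast (Set.range f) m) :
    InfClosed {I | f I = m} := by
  intro I hI J hJ
  have h_union : m ≤ f (I ∪ J) := hm.2 ⟨_, rfl⟩
  have h_inter : m ≤ f (I ∩ J) := hm.2 ⟨_, rfl⟩
  have := hf I J
  change f I = m at hI
  change f J = m at hJ
  change f (I ∩ J) = m
  omega

theorem IsPolytope.nonempty {n : ℕ} {P : Set (V n)} (hP : IsPolytope P) : P.Nonempty := by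
  obtain ⟨F, hF, rfl⟩ := hP
  exact hF.to_set.convexHull

section TupleDimension

variable {n : ℕ} {K : Type} [Fintype K] {A : K → Set (V n)}

theorem tdim_union_add_tdim_inter_le [DecidableEq K] (hA : ∀ k, (A k).Nonempty)
    (I J : Finset K) : tdim A (I ∪ J) + tdim A (I ∩ J) ≤ tdim A I + tdim A J := by
  set W : K → Submodule ℝ (V n) := fun j => vectorSpan ℝ (A j)
  have h_span : ∀ L : Finset K, affDim (∑ j ∈ L, A j) = Module.finrank ℝ ↥(L.sup W) :=
    fun L => by rw [affDim, vectorSpan_finset_sum hA]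
  have h_modular := Submodule.finrank_sup_add_finrank_inf_eq (I.sup W) (J.sup W)
  have h_inter :
      Module.finrank ℝ ↥((I ∩ J).sup W) ≤ Module.finrank ℝ ↥(I.sup W ⊓ J.sup W) :=
    Submodule.finrank_mono (le_inf (Finset.sup_mono Finset.inter_subset_left)
      (Finset.sup_mono Finset.inter_subset_right))
  have h_card := Finset.card_union_add_card_inter I J
  simp only [tdim, h_span]
  rw [Finset.sup_union]
  omega

theorem essential_iff_eq_of_isLeast {m : ℤ} {I₀ J : Finset K}
    (hm : IsLeast (Set.range (tdim A)) m) (hI₀ : IsLeast {I | tdim A I = m} I₀) :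
    Essential A J ↔ J = I₀ := by
  constructor
  · rintro ⟨hJ, hJ_lt⟩
    have hJm : tdim A J = m := hJ.unique hm
    by_contra hJI₀
    have hI₀J : I₀ ⊂ J := (hI₀.2 hJm).ssubset_of_ne (Ne.symm hJI₀)
    exact (hJ_lt I₀ hI₀J).ne (hJm.trans hI₀.1.symm)
  · rintro rfl
    refine ⟨hI₀.1 ▸ hm, fun I hI => hI₀.1 ▸ (hm.2 ⟨I, rfl⟩).lt_of_ne fun hIm => ?_⟩
    exact hI.not_subset (hI₀.2 hIm.symm)

end TupleDimension

theorem stmt2_general {n : ℕ} {K : Type} [Fintype K]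
    (A : K → Set (V n)) (hA : ∀ k, IsPolytope (A k))
    (m : ℤ) (hm : IsLeast (Set.range (tdim A)) m) :
    ∃! J : Finset K, (Essential A J ∧ ∀ J' : Finset K, Essential A J' → J' ⊆ J) ∧
      (tdim A J = m ∧
        ∀ I₀ : Finset K, (tdim A I₀ = m ∧ ∀ I : Finset K, tdim A I = m → I₀ ⊆ I) → J = I₀) := by
  classical
  have h_submod := tdim_union_add_tdim_inter_le fun k => (hA k).nonempty
  obtain ⟨I₀, hI₀⟩ : ∃ I₀, IsLeast {I | tdim A I = m} I₀ :=
    (Set.toFinite _).exists_isLeast_of_infClosed hm.1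
      (infClosed_minimizers_of_submodular h_submod hm)
  have h_ess : ∀ J, Essential A J ↔ J = I₀ := fun J => essential_iff_eq_of_isLeast hm hI₀
  refine ⟨I₀, ⟨⟨(h_ess I₀).2 rfl, fun J hJ => ((h_ess J).1 hJ).le⟩, hI₀.1,
    fun I hI => hI₀.unique hI⟩, ?_⟩
  rintro J ⟨⟨hJ, -⟩, -⟩
  exact (h_ess J).1 hJ

/-- There is a unique maximal essential subtuple, and it coincides with the unique
minimal subset realizing `min dim A`. -/
theorem stmt2 {n : ℕ} {K : Type} [Fintype K] [DecidableEq K]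
    (A : K → Set (V n)) (hA : ∀ k, IsPolytope (A k))
    (m : ℤ) (hm : IsLeast (Set.range (tdim A)) m) :
    ∃! J : Finset K, (Essential A J ∧ ∀ J' : Finset K, Essential A J' → J' ⊆ J) ∧
      (tdim A J = m ∧
        ∀ I₀ : Finset K, (tdim A I₀ = m ∧ ∀ I : Finset K, tdim A I = m → I₀ ⊆ I) → J = I₀) :=
  stmt2_general A hA m hm

end
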